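/- Let L(t), Lhat(t), B(t), Bhat(t) be continuously differentiable families of N×N real matrices satisfying the weakly coupled Lax equations dL/dt = [B,L] and dLhat/dt = [Bhat, L] + [B, Lhat]. Then for every k ≥ 1, the quantity trace(L(t)^{k-1} Lhat(t)) times k, i.e., d/dt trace of the derivative of L^k in the Lhat-direction, is conserved: trace(Σ_{i+j=k-1} L^i Lhat L^j) is constant in t. -/

import Mathlib

/-!
Differentiating along the flow gives `(L^m Lhat)' = [B, L^m Lhat] + [L^m Bhat, L]`, a sum of
commutators, so `tr (L^(k-1) Lhat)` is constant. By cyclicity of the trace, each of the `k`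
terms `L^i Lhat L^(k-1-i)` of the conserved sum has this same trace.
-/

open Matrix

def Matrix.HasEntrywiseDerivAt {𝕜 m n : Type*} [NontriviallyNormedField 𝕜]
    (F : 𝕜 → Matrix m n 𝕜) (F' : Matrix m n 𝕜) (t : 𝕜) : Prop :=
  ∀ i j, HasDerivAt (fun u => F u i j) (F' i j) t

namespace Matrix.HasEntrywiseDerivAt

variable {𝕜 l m n : Type*} [NontriviallyNormedField 𝕜] [Fintype m] {t : 𝕜}

theorem mul {F : 𝕜 → Matrix l m 𝕜} {G : 𝕜 → Matrix m n 𝕜} {F' : Matrix l m 𝕜}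
    {G' : Matrix m n 𝕜} (hF : HasEntrywiseDerivAt F F' t) (hG : HasEntrywiseDerivAt G G' t) :
    HasEntrywiseDerivAt (fun u => F u * G u) (F' * G t + F t * G') t := by
  intro i j
  simpa only [mul_apply, add_apply, Finset.sum_add_distrib] using
    HasDerivAt.fun_sum fun k _ => (hF i k).fun_mul (hG k j)

theorem trace {F : 𝕜 → Matrix m m 𝕜} {F' : Matrix m m 𝕜} (hF : HasEntrywiseDerivAt F F' t) :
    HasDerivAt (fun u => (F u).trace) F'.trace t :=
  HasDerivAt.fun_sum fun i _ => hF i i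

variable [DecidableEq m]

theorem pow_of_lax {L B : 𝕜 → Matrix m m 𝕜} (hL : HasEntrywiseDerivAt L ⁅B t, L t⁆ t)
    (k : ℕ) : HasEntrywiseDerivAt (fun u => L u ^ k) ⁅B t, L t ^ k⁆ t := by
  induction k with
  | zero =>
    intro i j
    simpa [Ring.lie_def] using hasDerivAt_const t ((1 : Matrix m m 𝕜) i j)
  | succ k ih =>
    have h := ih.mul hL
    have hbracket : ⁅B t, L t ^ k⁆ * L t + L t ^ k * ⁅B t, L t⁆ = ⁅B t, L t ^ (k + 1)⁆ := by
      simp only [Ring.lie_def, pow_succ]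
      noncomm_ring
    simpa only [hbracket, pow_succ] using h

end Matrix.HasEntrywiseDerivAt

namespace Matrix

theorem hasDerivAt_trace_pow_mul_of_weakLax {𝕜 m : Type*} [NontriviallyNormedField 𝕜]
    [Fintype m] [DecidableEq m] {L Lhat B Bhat : 𝕜 → Matrix m m 𝕜} {t : 𝕜}
    (hL : HasEntrywiseDerivAt L ⁅B t, L t⁆ t)
    (hLhat : HasEntrywiseDerivAt Lhat (⁅Bhat t, L t⁆ + ⁅B t, Lhat t⁆) t) (k : ℕ) :
    HasDerivAt (fun u => (L u ^ k * Lhat u).trace) 0 t := by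
  have h := ((hL.pow_of_lax k).mul hLhat).trace
  have hcommutators : ⁅B t, L t ^ k⁆ * Lhat t + L t ^ k * (⁅Bhat t, L t⁆ + ⁅B t, Lhat t⁆)
      = ⁅B t, L t ^ k * Lhat t⁆ + ⁅L t ^ k * Bhat t, L t⁆ := by
    have hc : L t * L t ^ k = L t ^ k * L t := (Commute.self_pow _ _).eq
    simp only [Ring.lie_def, mul_add, mul_sub, sub_mul, ← mul_assoc, hc]
    abel
  rwa [hcommutators, trace_add, LieAlgebra.matrix_trace_commutator_zero,
    LieAlgebra.matrix_trace_commutator_zero, add_zero] at h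

theorem trace_sum_pow_mul_mul_pow {n R : Type*} [Fintype n] [DecidableEq n]
    [CommSemiring R] (A X : Matrix n n R) (k : ℕ) :
    (∑ i ∈ Finset.range k, A ^ i * X * A ^ (k - 1 - i)).trace = k * (A ^ (k - 1) * X).trace := by
  rw [trace_sum, Finset.sum_congr rfl fun i hi => ?_, Finset.sum_const, Finset.card_range,
    nsmul_eq_mul]
  rw [trace_mul_comm, ← mul_assoc, ← pow_add,
    Nat.sub_add_cancel (Nat.le_sub_one_of_lt (Finset.mem_range.mp hi))]

end Matrix

theorem stmt3_general (N : ℕ) (a b : ℝ) (L Lhat B Bhat : ℝ → Matrix (Fin N) (Fin N) ℝ)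
    (hLax : ∀ t ∈ Set.Ioo a b, ∀ i j,
      HasDerivAt (fun u => L u i j) ((B t * L t - L t * B t) i j) t)
    (hLaxHat : ∀ t ∈ Set.Ioo a b, ∀ i j,
      HasDerivAt (fun u => Lhat u i j)
        ((Bhat t * L t - L t * Bhat t + (B t * Lhat t - Lhat t * B t)) i j) t) :
    ∀ k : ℕ, 1 ≤ k → ∀ t₁ ∈ Set.Ioo a b, ∀ t₂ ∈ Set.Ioo a b,
      (∑ i ∈ Finset.range k, L t₁ ^ i * Lhat t₁ * L t₁ ^ (k - 1 - i)).trace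
        = (∑ i ∈ Finset.range k, L t₂ ^ i * Lhat t₂ * L t₂ ^ (k - 1 - i)).trace := by
  intro k _ t₁ ht₁ t₂ ht₂
  have hconserved : ∀ t ∈ Set.Ioo a b, HasDerivAt (fun u => (L u ^ (k - 1) * Lhat u).trace) 0 t :=
    fun t ht => hasDerivAt_trace_pow_mul_of_weakLax (hLax t ht) (hLaxHat t ht) (k - 1)
  rw [trace_sum_pow_mul_mul_pow, trace_sum_pow_mul_mul_pow]
  congr 1
  exact isOpen_Ioo.is_const_of_deriv_eq_zero isPreconnected_Ioo
    (fun t ht => (hconserved t ht).differentiableAt.differentiableWithinAt)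
    (fun t ht => (hconserved t ht).deriv) ht₁ ht₂

/-- For the weakly coupled Lax equations `dL/dt = [B,L]`,
`dLhat/dt = [Bhat,L] + [B,Lhat]`, the quantity
`trace (Σ_{i+j=k-1} L^i * Lhat * L^j)` is conserved for every `k ≥ 1`. -/
theorem stmt3 (N : ℕ) (a b : ℝ) (L Lhat B Bhat : ℝ → Matrix (Fin N) (Fin N) ℝ)
    (hLax : ∀ t ∈ Set.Ioo a b, ∀ i j,
      HasDerivAt (fun u => L u i j) ((B t * L t - L t * B t) i j) t)
    (hLaxHat : ∀ t ∈ Set.Ioo a b, ∀ i j,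
      HasDerivAt (fun u => Lhat u i j)
        ((Bhat t * L t - L t * Bhat t + (B t * Lhat t - Lhat t * B t)) i j) t)
    (hBcont : ∀ i j, ContinuousOn (fun t => B t i j) (Set.Ioo a b))
    (hBhcont : ∀ i j, ContinuousOn (fun t => Bhat t i j) (Set.Ioo a b))
    (hLcont : ∀ i j, ContinuousOn (fun t => L t i j) (Set.Ioo a b))
    (hLhcont : ∀ i j, ContinuousOn (fun t => Lhat t i j) (Set.Ioo a b)) :
    ∀ k : ℕ, 1 ≤ k → ∀ t₁ ∈ Set.Ioo a b, ∀ t₂ ∈ Set.Ioo a b,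
      (∑ i ∈ Finset.range k, L t₁ ^ i * Lhat t₁ * L t₁ ^ (k - 1 - i)).trace
        = (∑ i ∈ Finset.range k, L t₂ ^ i * Lhat t₂ * L t₂ ^ (k - 1 - i)).trace :=
  stmt3_general N a b L Lhat B Bhat hLax hLaxHat
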